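/- For M-periodic grid functions f and U, the identity -(Δ_x(fU), f) = (h/2) Σ_{i=1}^M f_i f_{i+1} (U_i - U_{i+1})/h holds, and consequently -(Δ_x(fU), f) ≤ (1/2)‖δ_x U‖_∞ ‖f‖², where Δ_x w_i = (w_{i+1} - w_{i-1})/(2h), (fU)_i = f_i U_i, (u,v) = h Σ u_i v_i, ‖f‖² = h Σ f_i², and ‖δ_x U‖_∞ = max_i |(U_{i+1} - U_i)/h|. -/

import Mathlib

/-- Central difference operator `Δ_x w i = (w (i+1) - w (i-1)) / (2h)`. -/
noncomputable def dX (h : ℝ) (w : ℤ → ℝ) (i : ℤ) : ℝ := (w (i + 1) - w (i - 1)) / (2 * h)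

lemma shift_sum (M : ℕ) (hM : 1 ≤ M) (g : ℤ → ℝ) (hg : ∀ i, g (i + M) = g i) :
    ∑ i ∈ Finset.Icc (1 : ℤ) (M : ℤ), g (i + 1) = ∑ i ∈ Finset.Icc (1 : ℤ) (M : ℤ), g i := by
  have hM' : (1 : ℤ) ≤ M := by exact_mod_cast hM
  have h1 : ∑ i ∈ Finset.Icc (1 : ℤ) (M : ℤ), g (i + 1)
      = ∑ i ∈ Finset.Icc (2 : ℤ) ((M : ℤ) + 1), g i := by
    rw [show Finset.Icc (2:ℤ) ((M:ℤ)+1) = Finset.map (addRightEmbedding 1) (Finset.Icc 1 (M:ℤ)) by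
      rw [Finset.map_add_right_Icc]; norm_num]
    rw [Finset.sum_map]
    rfl
  rw [h1,
    show Finset.Icc (2:ℤ) ((M:ℤ)+1) = insert ((M:ℤ)+1) (Finset.Icc 2 (M:ℤ)) by
      ext x; simp only [Finset.mem_Icc, Finset.mem_insert]; omega,
    Finset.sum_insert (by simp only [Finset.mem_Icc]; omega),
    show Finset.Icc (1:ℤ) (M:ℤ) = insert 1 (Finset.Icc 2 (M:ℤ)) by
      ext x; simp only [Finset.mem_Icc, Finset.mem_insert]; omega,
    Finset.sum_insert (by simp only [Finset.mem_Icc]; omega)]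
  have := hg 1
  rw [show (M:ℤ)+1 = 1 + (M:ℤ) by ring, this]

lemma shift_sum' (M : ℕ) (hM : 1 ≤ M) (g : ℤ → ℝ) (hg : ∀ i, g (i + M) = g i) :
    ∑ i ∈ Finset.Icc (1 : ℤ) (M : ℤ), g (i - 1) = ∑ i ∈ Finset.Icc (1 : ℤ) (M : ℤ), g i := by
  have := shift_sum M hM (fun i => g (i - 1)) (fun i => by
    rw [show i + (M:ℤ) - 1 = (i - 1) + (M:ℤ) by ring, hg])
  simp only [add_sub_cancel_right] at this
  rw [← this]

theorem stmt_16 (M : ℕ) (hM : 1 ≤ M) (h : ℝ) (hh : 0 < h)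
    (f U : ℤ → ℝ) (hf : ∀ i : ℤ, f (i + M) = f i) (hU : ∀ i : ℤ, U (i + M) = U i) :
    (-(h * ∑ i ∈ Finset.Icc (1 : ℤ) (M : ℤ), dX h (fun j => f j * U j) i * f i) =
      (h / 2) * ∑ i ∈ Finset.Icc (1 : ℤ) (M : ℤ), f i * f (i + 1) * ((U i - U (i + 1)) / h)) ∧
    -(h * ∑ i ∈ Finset.Icc (1 : ℤ) (M : ℤ), dX h (fun j => f j * U j) i * f i) ≤
      (1 / 2) *
        ((Finset.Icc (1 : ℤ) (M : ℤ)).sup'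
          (Finset.nonempty_Icc.mpr (by exact_mod_cast hM))
          (fun i => |(U (i + 1) - U i) / h|)) *
        (h * ∑ i ∈ Finset.Icc (1 : ℤ) (M : ℤ), (f i) ^ 2) := by
  have hh' : h ≠ 0 := ne_of_gt hh
  set S := Finset.Icc (1 : ℤ) (M : ℤ) with hS
  set g : ℤ → ℝ := fun i => f i * U i * f (i + 1) with hg
  have hgper : ∀ i, g (i + M) = g i := by
    intro i
    simp only [hg]
    rw [hf, hU, show i + (M:ℤ) + 1 = (i + 1) + (M:ℤ) by ring, hf]
  have hgshift : ∑ i ∈ S, g (i - 1) = ∑ i ∈ S, g i := shift_sum' M hM g hgper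
  have key : ∑ i ∈ S, dX h (fun j => f j * U j) i * f i
      = (1 / (2 * h)) * ∑ i ∈ S, f i * f (i + 1) * (U (i + 1) - U i) := by
    have e1 : ∀ i ∈ S, dX h (fun j => f j * U j) i * f i
        = (1 / (2 * h)) * (f i * f (i + 1) * U (i + 1)) - (1 / (2 * h)) * g (i - 1) := by
      intro i _
      simp only [dX, hg, sub_add_cancel]
      field_simp
    rw [Finset.sum_congr rfl e1, Finset.sum_sub_distrib, ← Finset.mul_sum, ← Finset.mul_sum,
      hgshift, ← mul_sub, ← Finset.sum_sub_distrib]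
    congr 1
    exact Finset.sum_congr rfl (fun i _ => by simp only [hg]; ring)
  have part1 : -(h * ∑ i ∈ S, dX h (fun j => f j * U j) i * f i) =
      (h / 2) * ∑ i ∈ S, f i * f (i + 1) * ((U i - U (i + 1)) / h) := by
    rw [key]
    have e2 : ∑ i ∈ S, f i * f (i + 1) * ((U i - U (i + 1)) / h)
        = (-(1/h)) * ∑ i ∈ S, f i * f (i + 1) * (U (i + 1) - U i) := by
      rw [Finset.mul_sum]
      exact Finset.sum_congr rfl (fun i _ => by field_simp; ring)
    rw [e2]
    field_simp
  refine ⟨part1, ?_⟩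
  rw [part1]
  have hne : S.Nonempty := Finset.nonempty_Icc.mpr (by exact_mod_cast hM)
  set K := S.sup' hne (fun i => |(U (i + 1) - U i) / h|) with hK
  have hKmem : ∀ i ∈ S, |(U (i + 1) - U i) / h| ≤ K :=
    fun i hi => Finset.le_sup' (fun j => |(U (j + 1) - U j) / h|) hi
  have h1S : (1:ℤ) ∈ S := by
    simp only [hS, Finset.mem_Icc]
    exact ⟨le_refl 1, by exact_mod_cast hM⟩
  have hK0 : 0 ≤ K := le_trans (abs_nonneg _) (hKmem 1 h1S)
  have termbd : ∀ i ∈ S, f i * f (i + 1) * ((U i - U (i + 1)) / h)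
      ≤ K * ((f i ^ 2 + f (i + 1) ^ 2) / 2) := by
    intro i hi
    have hq := abs_le.mp (hKmem i hi)
    have heq : (U i - U (i + 1)) / h = -((U (i + 1) - U i) / h) := by ring
    rw [heq]
    set q := (U (i + 1) - U i) / h
    nlinarith [mul_nonneg (by linarith [hq.2] : (0:ℝ) ≤ K - q) (sq_nonneg (f i + f (i + 1))),
      mul_nonneg (by linarith [hq.1] : (0:ℝ) ≤ K + q) (sq_nonneg (f i - f (i + 1)))]
  have sumbd : ∑ i ∈ S, f i * f (i + 1) * ((U i - U (i + 1)) / h)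
      ≤ ∑ i ∈ S, K * ((f i ^ 2 + f (i + 1) ^ 2) / 2) := Finset.sum_le_sum termbd
  have hfshift : ∑ i ∈ S, f (i + 1) ^ 2 = ∑ i ∈ S, f i ^ 2 :=
    shift_sum M hM (fun i => f i ^ 2) (fun i => by rw [hf])
  have sumeq : ∑ i ∈ S, K * ((f i ^ 2 + f (i + 1) ^ 2) / 2) = K * ∑ i ∈ S, f i ^ 2 := by
    rw [← Finset.mul_sum]
    congr 1
    rw [← Finset.sum_div, Finset.sum_add_distrib, hfshift]
    ring
  have final : ∑ i ∈ S, f i * f (i + 1) * ((U i - U (i + 1)) / h) ≤ K * ∑ i ∈ S, f i ^ 2 :=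
    sumbd.trans_eq sumeq
  calc (h / 2) * ∑ i ∈ S, f i * f (i + 1) * ((U i - U (i + 1)) / h)
      ≤ (h / 2) * (K * ∑ i ∈ S, f i ^ 2) :=
        mul_le_mul_of_nonneg_left final (by positivity)
    _ = (1 / 2) * K * (h * ∑ i ∈ S, f i ^ 2) := by ring
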